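/- Let A = A₀ ⊕ A₁ be a supercommutative associative 𝕂-algebra and δ : A → A an odd derivation. For homogeneous x, y ∈ A, the 𝕂-linear operator (x·δ)∘(y·δ) + (-1)^{(|x|+1)(|y|+1)} (y·δ)∘(x·δ) on A (where ∘ is composition of operators and (x·δ)(a) = x δ(a)) equals the operator β(x,y)·δ, where β(x,y) = x δ(y) + (-1)^{(|x|+1)(|y|+1)} y δ(x); in particular, all terms involving δ² cancel. -/

import Mathlib

/-- Sign function: `sgn K p = (-1)^p` for a parity `p : ZMod 2`. -/
def sgn (K : Type*) [Field K] : ZMod 2 → K := fun p => if p = 0 then 1 else -1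

/-- `β(x,y) = x δ(y) + (-1)^{(|x|+1)(|y|+1)} y δ(x)` on homogeneous elements,
with the parities given as explicit arguments: the coefficient of the bracket
`{x·δ, y·δ}` of the vector fields `x·δ`, `y·δ`. -/
def betab {K : Type*} [Field K] {A : Type*} [NonUnitalRing A] [Module K A]
    (δ : A →ₗ[K] A) (x : A) (p : ZMod 2) (y : A) (q : ZMod 2) : A :=
  x * δ y + sgn K ((p + 1) * (q + 1)) • (y * δ x)

/-!
Expanding with the Leibniz rule, `(x·δ)(y·δ)a = x δ(y) δ(a) + (-1)^|y| x y δ²(a)`, and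
symmetrically. The first-order terms add up to `β(x,y) δ(a)`; in the second-order terms
supercommutativity turns `x y` into `(-1)^{|x||y|} y x`, and the two resulting signs
`(-1)^{|y| + |x||y|}` and `(-1)^{(|x|+1)(|y|+1) + |x|}` are opposite.
-/

section Sign

variable {K : Type*} [Field K]

theorem sgn_zero : sgn K 0 = 1 := if_pos rfl

theorem sgn_one : sgn K 1 = -1 := if_neg one_ne_zero

theorem sgn_add (p q : ZMod 2) : sgn K (p + q) = sgn K p * sgn K q := by
  have h (r : ZMod 2) : r = 0 ∨ r = 1 := by revert r; decide
  rcases h p with rfl | rfl <;> rcases h q with rfl | rfl <;>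
    simp [sgn_zero, sgn_one, show (1 : ZMod 2) + 1 = 0 from rfl]

theorem sgn_add_one_mul_add_one_mul_sgn (p q : ZMod 2) :
    sgn K ((p + 1) * (q + 1)) * sgn K p = -(sgn K q * sgn K (p * q)) := by
  have h : (p + 1) * (q + 1) + p = q + p * q + 1 := by revert p q; decide
  rw [← sgn_add, ← sgn_add, h, sgn_add, sgn_one, mul_neg_one]

end Sign

theorem smul_mul_add_smul_smul_mul_eq_zero {K : Type*} [Field K] {A : Type*} [NonUnitalRing A]
    [Module K A] [IsScalarTower K A A] {p q : ZMod 2} {x y : A}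
    (hxy : x * y = sgn K (p * q) • (y * x)) (c : A) :
    sgn K q • (x * y * c) + sgn K ((p + 1) * (q + 1)) • sgn K p • (y * x * c) = 0 := by
  rw [hxy, smul_mul_assoc, smul_smul, smul_smul, ← add_smul,
    sgn_add_one_mul_add_one_mul_sgn, add_neg_cancel, zero_smul]

theorem stmt7_general
    {K : Type*} [Field K]
    {A : Type*} [NonUnitalRing A] [Module K A] [SMulCommClass K A A] [IsScalarTower K A A]
    -- ℤ₂-grading: `H p` is the subspace of homogeneous elements of parity `p`
    (H : ZMod 2 → Submodule K A)
    (hcomm : ∀ (p q : ZMod 2) (x y : A), x ∈ H p → y ∈ H q →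
      x * y = sgn K (p * q) • (y * x))
    -- an odd derivation `δ`
    (δ : A →ₗ[K] A)
    (hLeib : ∀ (p : ZMod 2) (x : A), x ∈ H p → ∀ y : A,
      δ (x * y) = δ x * y + sgn K p • (x * δ y)) :
    ∀ (p q : ZMod 2) (x y : A), x ∈ H p → y ∈ H q →
      ((LinearMap.mulLeft K x) ∘ₗ δ) ∘ₗ ((LinearMap.mulLeft K y) ∘ₗ δ) +
        sgn K ((p + 1) * (q + 1)) •
          (((LinearMap.mulLeft K y) ∘ₗ δ) ∘ₗ ((LinearMap.mulLeft K x) ∘ₗ δ)) =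
      (LinearMap.mulLeft K (betab δ x p y q)) ∘ₗ δ := by
  intro p q x y hx hy
  ext a
  have hδδ := smul_mul_add_smul_smul_mul_eq_zero (hcomm p q x y hx hy) (δ (δ a))
  simp only [LinearMap.add_apply, LinearMap.smul_apply, LinearMap.comp_apply,
    LinearMap.mulLeft_apply, betab, hLeib q y hy (δ a), hLeib p x hx (δ a)]
  simp only [mul_add, mul_smul_comm, add_mul, smul_mul_assoc, ← mul_assoc] at hδδ ⊢
  linear_combination (norm := module) hδδ

theorem stmt7
    {K : Type*} [Field K] [CharZero K]
    {A : Type*} [NonUnitalRing A] [Module K A] [SMulCommClass K A A] [IsScalarTower K A A]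
    -- ℤ₂-grading: `H p` is the subspace of homogeneous elements of parity `p`
    (H : ZMod 2 → Submodule K A)
    (hgrade : DirectSum.IsInternal H)
    (hmulH : ∀ (p q : ZMod 2) (x y : A), x ∈ H p → y ∈ H q → x * y ∈ H (p + q))
    (hcomm : ∀ (p q : ZMod 2) (x y : A), x ∈ H p → y ∈ H q →
      x * y = sgn K (p * q) • (y * x))
    -- an odd derivation `δ`
    (δ : A →ₗ[K] A)
    (hδH : ∀ (p : ZMod 2) (x : A), x ∈ H p → δ x ∈ H (p + 1))
    (hLeib : ∀ (p : ZMod 2) (x : A), x ∈ H p → ∀ y : A,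
      δ (x * y) = δ x * y + sgn K p • (x * δ y)) :
    ∀ (p q : ZMod 2) (x y : A), x ∈ H p → y ∈ H q →
      ((LinearMap.mulLeft K x) ∘ₗ δ) ∘ₗ ((LinearMap.mulLeft K y) ∘ₗ δ) +
        sgn K ((p + 1) * (q + 1)) •
          (((LinearMap.mulLeft K y) ∘ₗ δ) ∘ₗ ((LinearMap.mulLeft K x) ∘ₗ δ)) =
      (LinearMap.mulLeft K (betab δ x p y q)) ∘ₗ δ :=
  stmt7_general H hcomm δ hLeib
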